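/- Let 0 < F < 2, let ν > (1+√(1+4F))/(2F) with ν > 1, and set H_R := 1/ν², Q_R := H_R^{3/2}, c := (1 − H_R^{3/2})/(1 − H_R). Define the constant matrices A₊ := [[−c, 1],[H_R/F² − Q_R²/H_R², 2Q_R/H_R − c]] and E₊ := [[0, 0],[2Q_R²/H_R³ + 1, −2Q_R/H_R²]]. Then for every λ ∈ ℂ with Re λ > 0 and every γ ∈ ℂ with det(E₊ − λ·Id − γ·A₊) = 0, one has Re γ > 0. -/

import Mathlib

/-!
Pair a kernel vector `v` of `E₊ - λ - γ A₊` with `S v` for the symmetrizer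
`S = [[(4 + 2/F²)/ν, -3], [-3, 2ν]]`. This `S` is positive definite exactly when `F < 2`; it makes
`S A₊` symmetric and negative definite, because `det (S A₊) = det S · det A₊` and `det A₊ > 0` is the
discontinuous-profile condition `F ν² > ν + 1`; and `S E₊ = -w wᵀ` with `w = (3, -2ν)`. Taking real
parts, `Re ⟨v, S E₊ v⟩ = Re λ ⟨v, S v⟩ + Re γ ⟨v, S A₊ v⟩`. The left side is `≤ 0`, while
`Re λ ⟨v, S v⟩ > 0` and `⟨v, S A₊ v⟩ < 0`, so `Re γ > 0`.
-/

open Real Matrix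

/-- Wave speed `c := (1 − H_R^{3/2})/(1 − H_R)`. -/
noncomputable def speed (HR : ℝ) : ℝ := (1 - HR ^ ((3 : ℝ) / 2)) / (1 - HR)

/-- `Q_R := H_R^{3/2}`. -/
noncomputable def QR (HR : ℝ) : ℝ := HR ^ ((3 : ℝ) / 2)

/-- Limiting coefficient matrix `A₊` at the right state `(H_R, Q_R)`. -/
noncomputable def Aplus (F HR : ℝ) : Matrix (Fin 2) (Fin 2) ℝ :=
  !![-(speed HR), 1;
     HR / F ^ 2 - QR HR ^ 2 / HR ^ 2, 2 * QR HR / HR - speed HR]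

/-- Limiting coefficient matrix `E₊` at the right state `(H_R, Q_R)`. -/
noncomputable def Eplus (HR : ℝ) : Matrix (Fin 2) (Fin 2) ℝ :=
  !![0, 0;
     2 * QR HR ^ 2 / HR ^ 3 + 1, -(2 * QR HR) / HR ^ 2]

open scoped ComplexOrder

namespace Matrix

variable {n : Type*} [Fintype n]

theorem dotProduct_mulVec_map_ofReal {M : Matrix n n ℝ} (hM : M.IsSymm) (x : n → ℂ) :
    star x ⬝ᵥ (M.map Complex.ofReal *ᵥ x)
      = ((fun i => (x i).re) ⬝ᵥ (M *ᵥ fun i => (x i).re)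
        + (fun i => (x i).im) ⬝ᵥ (M *ᵥ fun i => (x i).im) : ℝ) := by
  have hswap : (fun i => (x i).re) ⬝ᵥ (M *ᵥ fun i => (x i).im)
      = (fun i => (x i).im) ⬝ᵥ (M *ᵥ fun i => (x i).re) := by
    rw [dotProduct_mulVec, ← mulVec_transpose, hM.eq, dotProduct_comm]
  apply Complex.ext
  · simp [dotProduct, mulVec, Complex.mul_re, Finset.sum_add_distrib, Finset.mul_sum]
  · simp only [dotProduct, mulVec, Finset.mul_sum] at hswap
    simp [dotProduct, mulVec, Complex.mul_im, Finset.mul_sum, Finset.sum_add_distrib, hswap]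

theorem PosSemidef.map_ofReal {M : Matrix n n ℝ} (hM : M.PosSemidef) :
    (M.map Complex.ofReal).PosSemidef := by
  refine .of_dotProduct_mulVec_nonneg
    (hM.isHermitian.map _ fun x => (Complex.conj_ofReal x).symm) fun x => ?_
  rw [dotProduct_mulVec_map_ofReal (isHermitian_iff_isSymm.1 hM.isHermitian), Complex.zero_le_real]
  exact add_nonneg (by simpa using hM.dotProduct_mulVec_nonneg _)
    (by simpa using hM.dotProduct_mulVec_nonneg _)

theorem PosDef.map_ofReal {M : Matrix n n ℝ} (hM : M.PosDef) :
    (M.map Complex.ofReal).PosDef := by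
  refine .of_dotProduct_mulVec_pos
    (hM.isHermitian.map _ fun x => (Complex.conj_ofReal x).symm) fun x hx => ?_
  rw [dotProduct_mulVec_map_ofReal (isHermitian_iff_isSymm.1 hM.isHermitian), Complex.zero_lt_real]
  have hre := hM.posSemidef.dotProduct_mulVec_nonneg fun i => (x i).re
  have him := hM.posSemidef.dotProduct_mulVec_nonneg fun i => (x i).im
  simp only [star_trivial] at hre him
  by_cases h : (fun i => (x i).re) = 0
  · have h' : (fun i => (x i).im) ≠ 0 := fun h' =>
      hx (funext fun i => Complex.ext (congrFun h i) (congrFun h' i))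
    exact add_pos_of_nonneg_of_pos hre (by simpa using hM.dotProduct_mulVec_pos h')
  · exact add_pos_of_pos_of_nonneg (by simpa using hM.dotProduct_mulVec_pos h) him

theorem isSymm_of_fin_two {α : Type*} {a b c d : α} (h : b = c) : (!![a, b; c, d]).IsSymm := by
  subst h
  ext i j
  fin_cases i <;> fin_cases j <;> rfl

theorem posDef_of_fin_two {M : Matrix (Fin 2) (Fin 2) ℝ} (hM : M.IsSymm) (h11 : 0 < M 1 1)
    (hdet : 0 < M.det) : M.PosDef := by
  refine .of_dotProduct_mulVec_pos (isHermitian_iff_isSymm.2 hM) fun x hx => ?_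
  have hsym : M 1 0 = M 0 1 := by simpa using congrFun (congrFun hM.eq 0) 1
  have hsquare : M 1 1 * (star x ⬝ᵥ (M *ᵥ x))
      = M.det * x 0 ^ 2 + (M 0 1 * x 0 + M 1 1 * x 1) ^ 2 := by
    simp only [dotProduct, Pi.star_apply, star_trivial, mulVec, Fin.sum_univ_two, hsym,
      det_fin_two]
    ring
  refine pos_of_mul_pos_right (hsquare ▸ ?_) h11.le
  rcases eq_or_ne (x 0) 0 with h0 | h0
  · have h1 : x 1 ≠ 0 := fun h1 => hx (by ext i; fin_cases i <;> simp [h0, h1])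
    simp only [h0, ne_eq, OfNat.ofNat_ne_zero, not_false_eq_true, zero_pow, mul_zero, zero_add]
    positivity
  · exact add_pos_of_pos_of_nonneg (mul_pos hdet (by positivity)) (sq_nonneg _)

end Matrix

section Symmetrizer

variable {n : Type*} [Fintype n] [DecidableEq n]

theorem re_pos_of_det_eq_zero_of_symmetrizer {S A E : Matrix n n ℂ} (hS : S.PosDef)
    (hSA : (-(S * A)).PosDef) (hSE : (-(S * E + (S * E)ᴴ)).PosSemidef) {lam gam : ℂ}
    (hlam : 0 < lam.re) (hdet : (E - lam • 1 - gam • A).det = 0) : 0 < gam.re := by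
  obtain ⟨v, hv, hker⟩ := exists_mulVec_eq_zero_iff.2 hdet
  have henergy : star v ⬝ᵥ ((S * E) *ᵥ v)
      = lam * (star v ⬝ᵥ (S *ᵥ v)) + gam * (star v ⬝ᵥ ((S * A) *ᵥ v)) := by
    have h := congrArg (fun w => star v ⬝ᵥ (S *ᵥ w)) hker
    simp only [sub_mulVec, smul_mulVec, one_mulVec, mulVec_sub, mulVec_smul, dotProduct_sub,
      dotProduct_smul, mulVec_zero, dotProduct_zero, mulVec_mulVec, smul_eq_mul] at h
    linear_combination h
  have hdiss : (star v ⬝ᵥ ((S * E) *ᵥ v)).re ≤ 0 := by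
    have hadj : star v ⬝ᵥ ((S * E)ᴴ *ᵥ v) = star (star v ⬝ᵥ ((S * E) *ᵥ v)) := by
      rw [dotProduct_mulVec, ← star_mulVec, star_dotProduct (v := (S * E) *ᵥ v)]
    have h := (Complex.le_def.1 (hSE.dotProduct_mulVec_nonneg v)).1
    rw [neg_mulVec, dotProduct_neg, add_mulVec, dotProduct_add, hadj] at h
    simp only [Complex.neg_re, Complex.add_re, Complex.star_def, Complex.conj_re,
      Complex.zero_re] at h
    linarith
  obtain ⟨hSre, hSim⟩ := Complex.lt_def.1 (hS.dotProduct_mulVec_pos hv)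
  obtain ⟨hSAre, hSAim⟩ := Complex.lt_def.1 (hSA.dotProduct_mulVec_pos hv)
  simp only [neg_mulVec, dotProduct_neg, Complex.neg_re, Complex.neg_im, Complex.zero_re,
    Complex.zero_im, zero_eq_neg] at hSre hSim hSAre hSAim
  have hre := congrArg Complex.re henergy
  simp only [Complex.add_re, Complex.mul_re, ← hSim, hSAim] at hre
  nlinarith [mul_pos hlam hSre]

theorem re_pos_of_det_eq_zero_of_real_symmetrizer {S A E : Matrix n n ℝ} (hS : S.PosDef)
    (hSA : (-(S * A)).PosDef) (hSE : (-(S * E + (S * E)ᵀ)).PosSemidef) {lam gam : ℂ}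
    (hlam : 0 < lam.re)
    (hdet : (E.map Complex.ofReal - lam • 1 - gam • A.map Complex.ofReal).det = 0) :
    0 < gam.re := by
  have hmap_mul (M N : Matrix n n ℝ) :
      (M * N).map Complex.ofReal = M.map Complex.ofReal * N.map Complex.ofReal :=
    Matrix.map_mul (f := Complex.ofRealHom)
  have hmap_transpose (M : Matrix n n ℝ) : Mᵀ.map Complex.ofReal = (M.map Complex.ofReal)ᴴ :=
    conjTranspose_map _ fun x => (Complex.conj_ofReal x).symm
  refine re_pos_of_det_eq_zero_of_symmetrizer hS.map_ofReal ?_ ?_ hlam hdet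
  · have h := hSA.map_ofReal
    rwa [Matrix.map_neg _ Complex.ofReal_neg, hmap_mul] at h
  · have h := hSE.map_ofReal
    rwa [Matrix.map_neg _ Complex.ofReal_neg, Matrix.map_add _ Complex.ofReal_add, hmap_transpose,
      hmap_mul] at h

end Symmetrizer

section RightState

variable {F ν : ℝ}

lemma QR_one_div_sq (hν : 0 < ν) : QR (1 / ν ^ 2) = 1 / ν ^ 3 := by
  rw [QR, one_div, ← inv_pow, ← Real.rpow_natCast, ← Real.rpow_mul (by positivity)]
  norm_num [Real.rpow_natCast]

lemma speed_one_div_sq (hν : 1 < ν) : speed (1 / ν ^ 2) = (ν ^ 2 + ν + 1) / (ν * (ν + 1)) := by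
  have hν0 : 0 < ν := by linarith
  have hν2 : ν ^ 2 - 1 ≠ 0 := by nlinarith
  rw [speed, ← QR, QR_one_div_sq hν0]
  field_simp
  ring

lemma Aplus_one_div_sq (hν : 0 < ν) : Aplus F (1 / ν ^ 2)
    = !![-speed (1 / ν ^ 2), 1; (1 / F ^ 2 - 1) / ν ^ 2, 2 / ν - speed (1 / ν ^ 2)] := by
  rw [Aplus, QR_one_div_sq hν]
  congr 2
  field_simp

lemma Eplus_one_div_sq (hν : 0 < ν) : Eplus (1 / ν ^ 2) = !![0, 0; 3, -(2 * ν)] := by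
  rw [Eplus, QR_one_div_sq hν]
  congr 2
  field_simp
  norm_num

lemma add_one_lt_mul_sq (hF : 0 < F) (hν : ν > (1 + √(1 + 4 * F)) / (2 * F)) :
    ν + 1 < F * ν ^ 2 := by
  have hroot : √(1 + 4 * F) ^ 2 = 1 + 4 * F := Real.sq_sqrt (by linarith)
  have h := (div_lt_iff₀ (by linarith : (0 : ℝ) < 2 * F)).1 hν
  nlinarith [Real.sqrt_nonneg (1 + 4 * F)]

lemma det_Aplus_one_div_sq_pos (hF : 0 < F) (hν : 1 < ν) (hdisc : ν + 1 < F * ν ^ 2) :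
    0 < (Aplus F (1 / ν ^ 2)).det := by
  have hν0 : 0 < ν := by linarith
  have hgap : 1 / F < ν ^ 2 / (ν + 1) := by
    rw [div_lt_div_iff₀ hF (by linarith)]
    linarith
  have hdet : (Aplus F (1 / ν ^ 2)).det = ((ν ^ 2 / (ν + 1)) ^ 2 - (1 / F) ^ 2) / ν ^ 2 := by
    rw [Aplus_one_div_sq hν0, det_fin_two_of, speed_one_div_sq hν]
    field_simp
    ring
  have hF_inv : 0 < 1 / F := by positivity
  rw [hdet]
  exact div_pos (by nlinarith) (by positivity)

noncomputable def symmetrizer (F ν : ℝ) : Matrix (Fin 2) (Fin 2) ℝ :=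
  !![(4 + 2 / F ^ 2) / ν, -3; -3, 2 * ν]

lemma det_symmetrizer_pos (hF0 : 0 < F) (hF2 : F < 2) (hν : 0 < ν) :
    0 < (symmetrizer F ν).det := by
  have hdet : (symmetrizer F ν).det = 4 / F ^ 2 - 1 := by
    rw [symmetrizer, det_fin_two_of]
    field_simp
    ring
  rw [hdet, sub_pos, lt_div_iff₀ (by positivity)]
  nlinarith

lemma symmetrizer_posDef (hF0 : 0 < F) (hF2 : F < 2) (hν : 0 < ν) :
    (symmetrizer F ν).PosDef :=
  posDef_of_fin_two (isSymm_of_fin_two rfl)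
    (by simp [symmetrizer, hν]) (det_symmetrizer_pos hF0 hF2 hν)

lemma symmetrizer_mul_Aplus_isSymm (hν : 0 < ν) :
    (symmetrizer F ν * Aplus F (1 / ν ^ 2)).IsSymm := by
  rw [Aplus_one_div_sq hν, symmetrizer, mul_fin_two]
  exact isSymm_of_fin_two (by field_simp; ring)

lemma neg_symmetrizer_mul_Aplus_posDef (hF0 : 0 < F) (hF2 : F < 2) (hν : 1 < ν)
    (hdisc : ν + 1 < F * ν ^ 2) : (-(symmetrizer F ν * Aplus F (1 / ν ^ 2))).PosDef := by
  have hν0 : 0 < ν := by linarith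
  refine posDef_of_fin_two (symmetrizer_mul_Aplus_isSymm hν0).neg ?_ ?_
  · rw [Aplus_one_div_sq hν0, speed_one_div_sq hν]
    simp only [symmetrizer, Matrix.neg_apply, Matrix.mul_apply, Fin.sum_univ_two, of_apply,
      cons_val_zero, cons_val_one]
    field_simp
    nlinarith
  · rw [det_neg, det_mul]
    simpa using mul_pos (det_symmetrizer_pos hF0 hF2 hν0) (det_Aplus_one_div_sq_pos hF0 hν hdisc)

lemma symmetrizer_mul_Eplus (hν : 0 < ν) :
    symmetrizer F ν * Eplus (1 / ν ^ 2) = -vecMulVec ![3, -(2 * ν)] ![3, -(2 * ν)] := by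
  rw [Eplus_one_div_sq hν, symmetrizer]
  ext i j
  fin_cases i <;> fin_cases j <;> simp [vecMulVec, Matrix.mul_apply]

lemma neg_symmetrizer_mul_Eplus_posSemidef (hν : 0 < ν) :
    (-(symmetrizer F ν * Eplus (1 / ν ^ 2)
      + (symmetrizer F ν * Eplus (1 / ν ^ 2))ᵀ)).PosSemidef := by
  have hw := posSemidef_vecMulVec_self_star ![3, -(2 * ν)]
  rw [star_trivial] at hw
  rw [symmetrizer_mul_Eplus hν, transpose_neg, transpose_vecMulVec, ← neg_add, neg_neg]
  exact hw.add hw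

end RightState

/-- Equation (4.2)(ii): in the discontinuous-profile regime
`ν > (1+√(1+4F))/(2F)`, both spatial roots `γ` of
`det(E₊ − λ·Id − γA₊) = 0` have positive real part whenever `Re λ > 0`. -/
theorem right_state_rates_pos (F nu : ℝ) (hF0 : 0 < F) (hF2 : F < 2)
    (hnu1 : 1 < nu) (hnu : nu > (1 + Real.sqrt (1 + 4 * F)) / (2 * F)) :
    ∀ lam : ℂ, 0 < lam.re → ∀ gam : ℂ,
      (((Eplus (1 / nu ^ 2)).map (Complex.ofReal))
        - lam • (1 : Matrix (Fin 2) (Fin 2) ℂ)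
        - gam • ((Aplus F (1 / nu ^ 2)).map (Complex.ofReal))).det = 0 →
      0 < gam.re := by
  intro lam hlam gam hdet
  have hnu0 : 0 < nu := by linarith
  exact re_pos_of_det_eq_zero_of_real_symmetrizer (symmetrizer_posDef hF0 hF2 hnu0)
    (neg_symmetrizer_mul_Aplus_posDef hF0 hF2 hnu1 (add_one_lt_mul_sq hF0 hnu))
    (neg_symmetrizer_mul_Eplus_posSemidef hnu0) hlam hdet
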